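/- For any bounded derivation D : V_f → E* into a dual V_f-bimodule E* and any a ∈ V_f with f(a) ≠ 0, there exists η ∈ E* such that D(a) = a·η − η·a. -/
import Mathlib


/-- The product `a · b = f(a) • b` on a Banach space `V`. -/
noncomputable def vfMul {V : Type*} [NormedAddCommGroup V] [NormedSpace ℂ V]
    (f : V →L[ℂ] ℂ) (a b : V) : V := f a • b

/-- Pointwise amenability of `V_f` at points `a` with `f(a) ≠ 0`: every bounded
derivation `D : V_f → E*` into the dual of a Banach `V_f`-bimodule `E` (with
actions `(a·η)(x) = η(x·a)`, `(η·a)(x) = η(a·x)`) is pointwise inner at `a`. -/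
theorem stmt_11 {V : Type*} [NormedAddCommGroup V] [NormedSpace ℂ V] [CompleteSpace V]
    (f : V →L[ℂ] ℂ) (hf : f ≠ 0) (hf1 : ‖f‖ ≤ 1)
    {E : Type*} [NormedAddCommGroup E] [NormedSpace ℂ E] [CompleteSpace E]
    -- bounded bimodule actions on `E`
    (lAct rAct : V → E →L[ℂ] E)
    (lAct_add : ∀ a b : V, lAct (a + b) = lAct a + lAct b)
    (lAct_smul : ∀ (c : ℂ) (a : V), lAct (c • a) = c • lAct a)
    (rAct_add : ∀ a b : V, rAct (a + b) = rAct a + rAct b)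
    (rAct_smul : ∀ (c : ℂ) (a : V), rAct (c • a) = c • rAct a)
    (lAct_mul : ∀ a b : V, lAct (vfMul f a b) = (lAct a).comp (lAct b))
    (rAct_mul : ∀ a b : V, rAct (vfMul f a b) = (rAct b).comp (rAct a))
    (lr_comm : ∀ a b : V, (lAct a).comp (rAct b) = (rAct b).comp (lAct a))
    -- a bounded derivation `D : V_f → E*`
    (D : V →L[ℂ] (E →L[ℂ] ℂ))
    (hD : ∀ a b : V, D (vfMul f a b) = (D b).comp (rAct a) + (D a).comp (lAct b)) :
    ∀ a : V, f a ≠ 0 →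
      ∃ η : E →L[ℂ] ℂ, D a = η.comp (rAct a) - η.comp (lAct a) := by

  intro a ha
  set c := f a with hc
  set e : V := c⁻¹ • a with he
  have hae : a = c • e := by
    rw [he, smul_smul, mul_inv_cancel₀ ha, one_smul]
  have hfe : f e = 1 := by
    rw [he, map_smul, smul_eq_mul, ← hc, inv_mul_cancel₀ ha]
  have hee : vfMul f e e = e := by simp [vfMul, hfe]
  have hP : (lAct e).comp (lAct e) = lAct e := by rw [← lAct_mul, hee]
  have hQ : (rAct e).comp (rAct e) = rAct e := by rw [← rAct_mul, hee]
  have hd : D e = (D e).comp (rAct e) + (D e).comp (lAct e) := by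
    conv_lhs => rw [← hee]
    exact hD e e
  have h1 : (D e).comp ((lAct e).comp (rAct e)) = 0 := by
    have h := congrArg (fun g : E →L[ℂ] ℂ => g.comp (rAct e)) hd
    simp only [ContinuousLinearMap.add_comp, ContinuousLinearMap.comp_assoc, hQ] at h
    have := add_left_cancel (a := (D e).comp (rAct e))
      (b := (D e).comp ((lAct e).comp (rAct e))) (c := 0)
    rw [add_zero] at this
    exact (this h.symm)
  have h2 : (D e).comp ((rAct e).comp (lAct e)) = 0 := by
    have h := congrArg (fun g : E →L[ℂ] ℂ => g.comp (lAct e)) hd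
    simp only [ContinuousLinearMap.add_comp, ContinuousLinearMap.comp_assoc, hP] at h
    -- h : (D e).comp (lAct e) = (D e).comp ((rAct e).comp (lAct e)) + (D e).comp (lAct e)
    have := congrArg (fun g => g - (D e).comp (lAct e)) h
    simpa using this.symm
  refine ⟨(D e).comp (rAct e) - (D e).comp (lAct e), ?_⟩
  have key : ((D e).comp (rAct e) - (D e).comp (lAct e)).comp (rAct e)
      - ((D e).comp (rAct e) - (D e).comp (lAct e)).comp (lAct e) = D e := by
    simp only [ContinuousLinearMap.sub_comp, ContinuousLinearMap.comp_assoc, hP, hQ, h1, h2]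
    rw [sub_zero, zero_sub, sub_neg_eq_add]
    exact hd.symm
  have hra : rAct a = c • rAct e := by rw [hae, rAct_smul]
  have hla : lAct a = c • lAct e := by rw [hae, lAct_smul]
  have hDa : D a = c • D e := by rw [hae, map_smul]
  rw [hra, hla, hDa, ContinuousLinearMap.comp_smul, ContinuousLinearMap.comp_smul]
  conv_lhs => rw [← key]
  exact smul_sub c _ _
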